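/- Let n ≥ 1, let k : ℂ → M_n(ℂ), τ : ℂ → ℂ, and let r̄ : ℂ×ℂ → M_{n²}(ℂ) satisfy the compact form of the N-reflection equation: r̄(λ,ν)·(k(λ) ⊗ 1_n) = (k(λ) ⊗ 1_n)·r̄(τ(λ),ν) for all λ,ν. Let B : ℂ → M_n(ℂ) be any matrix-valued function, p ≥ 1 an integer, and define M(λ,ν) = p·tr_a( (B(λ) ⊗ 1_n)^{p−1} · P·r̄(ν,λ)·P ) ∈ M_n(ℂ), where tr_a denotes the partial trace over the first tensor factor. Then for all λ,ν: M(λ,ν)·k(ν) = k(ν)·M(λ,τ(ν)). -/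

import Mathlib

open Matrix Kronecker

noncomputable section

/-- `x_a = x ⊗ 1`, acting on `ℂ^n ⊗ ℂ^n`. -/
def legA (n : ℕ) (x : Matrix (Fin n) (Fin n) ℂ) :
    Matrix (Fin n × Fin n) (Fin n × Fin n) ℂ :=
  x ⊗ₖ (1 : Matrix (Fin n) (Fin n) ℂ)

/-- The swap (permutation) matrix `P : P(u ⊗ v) = v ⊗ u`. -/
def Pmat (n : ℕ) : Matrix (Fin n × Fin n) (Fin n × Fin n) ℂ :=
  Matrix.of fun i j => if i.1 = j.2 ∧ i.2 = j.1 then 1 else 0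

/-- Partial trace over the first tensor factor: `(tr_a Z)_{jl} = ∑_i Z_{(i,j),(i,l)}`. -/
def ptrA (n : ℕ) (Z : Matrix (Fin n × Fin n) (Fin n × Fin n) ℂ) :
    Matrix (Fin n) (Fin n) ℂ :=
  Matrix.of fun j l => ∑ i : Fin n, Z (i, j) (i, l)

/-- `M(λ,ν) = p · tr_a((B(λ) ⊗ 1)^{p-1} · P r̄(ν,λ) P)`. -/
def Mop (n : ℕ) (rb : ℂ → ℂ → Matrix (Fin n × Fin n) (Fin n × Fin n) ℂ)
    (B : ℂ → Matrix (Fin n) (Fin n) ℂ) (p : ℕ) (lam ν : ℂ) :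
    Matrix (Fin n) (Fin n) ℂ :=
  (p : ℂ) • ptrA n ((legA n (B lam)) ^ (p - 1) * (Pmat n * rb ν lam * Pmat n))

/-!
Right or left multiplication of `tr_a Z` by `x` is `tr_a` of `Z` multiplied by `1 ⊗ x`. Conjugating
the reflection equation by the swap `P` moves `k(ν)` to the second tensor leg, where it commutes
with `(B(λ) ⊗ 1)^{p-1}`, so `1 ⊗ k(ν)` passes through the whole argument of the partial trace.
-/

def legB (n : ℕ) (x : Matrix (Fin n) (Fin n) ℂ) :
    Matrix (Fin n × Fin n) (Fin n × Fin n) ℂ :=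
  (1 : Matrix (Fin n) (Fin n) ℂ) ⊗ₖ x

section

variable {n : ℕ}

lemma ptrA_mul_legB (Z : Matrix (Fin n × Fin n) (Fin n × Fin n) ℂ)
    (x : Matrix (Fin n) (Fin n) ℂ) : ptrA n (Z * legB n x) = ptrA n Z * x := by
  ext j l
  simp [ptrA, legB, mul_apply, Fintype.sum_prod_type, one_apply, Finset.sum_mul]
  rw [Finset.sum_comm]

lemma ptrA_legB_mul (Z : Matrix (Fin n × Fin n) (Fin n × Fin n) ℂ)
    (x : Matrix (Fin n) (Fin n) ℂ) : ptrA n (legB n x * Z) = x * ptrA n Z := by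
  ext j l
  simp [ptrA, legB, mul_apply, Fintype.sum_prod_type, one_apply, Finset.mul_sum]
  rw [Finset.sum_comm]

lemma Pmat_mul_legA (x : Matrix (Fin n) (Fin n) ℂ) :
    Pmat n * legA n x = legB n x * Pmat n := by
  ext ⟨i, j⟩ ⟨a, b⟩
  simp [Pmat, legA, legB, mul_apply, Fintype.sum_prod_type, one_apply, ite_and, mul_comm]

lemma Pmat_mul_legB (x : Matrix (Fin n) (Fin n) ℂ) :
    Pmat n * legB n x = legA n x * Pmat n := by
  ext ⟨i, j⟩ ⟨a, b⟩
  simp [Pmat, legA, legB, mul_apply, Fintype.sum_prod_type, one_apply, ite_and, mul_comm]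

lemma commute_legA_legB (x y : Matrix (Fin n) (Fin n) ℂ) : Commute (legA n x) (legB n y) := by
  simp only [Commute, SemiconjBy, legA, legB, ← mul_kronecker_mul, Matrix.one_mul, Matrix.mul_one]

lemma Pmat_conj_mul_legB {Z W : Matrix (Fin n × Fin n) (Fin n × Fin n) ℂ}
    {x : Matrix (Fin n) (Fin n) ℂ} (h : Z * legA n x = legA n x * W) :
    Pmat n * Z * Pmat n * legB n x = legB n x * (Pmat n * W * Pmat n) := by
  rw [mul_assoc _ (Pmat n), Pmat_mul_legB, mul_assoc, ← mul_assoc Z, h, ← mul_assoc,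
    ← mul_assoc, Pmat_mul_legA, mul_assoc, mul_assoc, mul_assoc]

end

theorem stmt17_general (n : ℕ)
    (k : ℂ → Matrix (Fin n) (Fin n) ℂ) (τ : ℂ → ℂ)
    (rb : ℂ → ℂ → Matrix (Fin n × Fin n) (Fin n × Fin n) ℂ)
    (hcompact : ∀ lam ν : ℂ, rb lam ν * legA n (k lam) = legA n (k lam) * rb (τ lam) ν)
    (B : ℂ → Matrix (Fin n) (Fin n) ℂ) (p : ℕ) :
    ∀ lam ν : ℂ, Mop n rb B p lam ν * k ν = k ν * Mop n rb B p lam (τ ν) := by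
  intro lam ν
  have hswap := Pmat_conj_mul_legB (hcompact ν lam)
  have hB := ((commute_legA_legB (B lam) (k ν)).pow_left (p - 1)).eq
  rw [Mop, Mop, Matrix.smul_mul, Matrix.mul_smul, ← ptrA_mul_legB, ← ptrA_legB_mul,
    mul_assoc, hswap, ← mul_assoc, hB, mul_assoc]

/-- If `r̄` satisfies the compact form of the `N`-reflection equation
`r̄(λ,ν) k_a(λ) = k_a(λ) r̄(τ(λ),ν)`, then `M(λ,ν) k(ν) = k(ν) M(λ,τ(ν))`. -/
theorem stmt17 (n : ℕ) (hn : 1 ≤ n)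
    (k : ℂ → Matrix (Fin n) (Fin n) ℂ) (τ : ℂ → ℂ)
    (rb : ℂ → ℂ → Matrix (Fin n × Fin n) (Fin n × Fin n) ℂ)
    (hcompact : ∀ lam ν : ℂ, rb lam ν * legA n (k lam) = legA n (k lam) * rb (τ lam) ν)
    (B : ℂ → Matrix (Fin n) (Fin n) ℂ) (p : ℕ) (hp : 1 ≤ p) :
    ∀ lam ν : ℂ, Mop n rb B p lam ν * k ν = k ν * Mop n rb B p lam (τ ν) :=
  stmt17_general n k τ rb hcompact B p
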